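/- Let P be a double histogram, let s be a vertex of P, and let k ≥ 0. Then bd^k(s) and td^k(s) are co-visible. -/

import Mathlib

open Classical Set

noncomputable section

/-- A *double histogram*: an `x`-monotone orthogonal polygon in general position whose
base line lies on the `x`-axis.  It is described by its bottom columns (over the
breakpoints `xs` with depths `d < 0`) and its top columns (over the breakpoints `ys`
with heights `h > 0`).  A *simple histogram* is the special case `n = 1`, where the
upper boundary is the single (base) edge at height `h 0`. -/
structure DoubleHistogram where
  m : ℕ
  n : ℕ
  hm : 0 < m
  hn : 0 < n
  xs : Fin (m + 1) → ℝ
  ys : Fin (n + 1) → ℝ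
  d : Fin m → ℝ
  h : Fin n → ℝ
  xs_mono : StrictMono xs
  ys_mono : StrictMono ys
  left_eq : ys 0 = xs 0
  right_eq : ys (Fin.last n) = xs (Fin.last m)
  d_neg : ∀ i, d i < 0
  h_pos : ∀ j, 0 < h j
  /-- general position: no three vertices on a horizontal line -/
  d_inj : Function.Injective d
  h_inj : Function.Injective h
  /-- general position: no three vertices on a vertical line -/
  gen_pos : ∀ (i : Fin (m + 1)) (j : Fin (n + 1)), xs i = ys j →
      (i = 0 ∧ j = 0) ∨ (i = Fin.last m ∧ j = Fin.last n)

/-- Among the reals in `A`, the one of minimum absolute value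
(i.e. "closest to the base line"). -/
def closestToBase (A : Set ℝ) : ℝ :=
  sSup {y | y ∈ A ∧ ∀ y' ∈ A, |y| ≤ |y'|}

/-- The leftmost point of `S` among those minimizing the distance `|y|` to the base line. -/
def leftmostLowest (S : Set (ℝ × ℝ)) : ℝ × ℝ :=
  (sInf {x | ∃ y, (x, y) ∈ S ∧ ∀ q ∈ S, |y| ≤ |q.2|},
    closestToBase {y | (sInf {x | ∃ y', (x, y') ∈ S ∧ ∀ q ∈ S, |y'| ≤ |q.2|}, y) ∈ S})

namespace DoubleHistogram

variable (H : DoubleHistogram)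

/-- The polygon `P`, as a closed region of the plane. -/
def region : Set (ℝ × ℝ) :=
  (⋃ i : Fin H.m, Icc (H.xs i.castSucc) (H.xs i.succ) ×ˢ Icc (H.d i) 0) ∪
    ⋃ j : Fin H.n, Icc (H.ys j.castSucc) (H.ys j.succ) ×ˢ Icc 0 (H.h j)

/-- The vertex set `V(P)`. -/
def verts : Set (ℝ × ℝ) :=
  (⋃ i : Fin H.m,
      ({(H.xs i.castSucc, H.d i), (H.xs i.succ, H.d i)} : Set (ℝ × ℝ))) ∪
    ⋃ j : Fin H.n,
      ({(H.ys j.castSucc, H.h j), (H.ys j.succ, H.h j)} : Set (ℝ × ℝ))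

/-- `p` and `q` are co-visible: the axis-parallel rectangle they span lies in `P`. -/
def covisible (p q : ℝ × ℝ) : Prop :=
  Icc (min p.1 q.1) (max p.1 q.1) ×ˢ Icc (min p.2 q.2) (max p.2 q.2) ⊆ H.region

lemma covisible_symm {p q : ℝ × ℝ} (hpq : H.covisible p q) : H.covisible q p := by
  unfold covisible at hpq ⊢
  rwa [min_comm q.1 p.1, max_comm q.1 p.1, min_comm q.2 p.2, max_comm q.2 p.2]

/-- The (unweighted) visibility graph `G(P)` on the vertices of `P`. -/
def visGraph : SimpleGraph ↥H.verts where
  Adj u v := u ≠ v ∧ H.covisible ↑u ↑v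
  symm := ⟨fun _ _ hu => ⟨hu.1.symm, H.covisible_symm hu.2⟩⟩
  loopless := ⟨fun _ hu => hu.1 rfl⟩

/-- The closed neighborhood `N(v)`: `v` together with the vertices it sees. -/
def Nbr (v : ℝ × ℝ) : Set (ℝ × ℝ) :=
  {w | w ∈ H.verts ∧ (w = v ∨ H.covisible v w)}

/-- The abscissa where the leftward horizontal ray from `v` hits the boundary of `P`. -/
def lhit (v : ℝ × ℝ) : ℝ :=
  sInf {x | x ≤ v.1 ∧ Icc x v.1 ×ˢ ({v.2} : Set ℝ) ⊆ H.region}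

/-- The abscissa where the rightward horizontal ray from `v` hits the boundary of `P`. -/
def rhit (v : ℝ × ℝ) : ℝ :=
  sSup {x | v.1 ≤ x ∧ Icc v.1 x ×ˢ ({v.2} : Set ℝ) ⊆ H.region}

/-- The `y`-coordinate, among the vertices of `P` with abscissa `x` lying on the same side
of the base line as `side`, of the one closest to the base line (i.e. the endpoint of the
vertical edge at `x` closer to the base line). -/
def nearY (x : ℝ) (side : ℝ) : ℝ :=
  if side < 0 then sSup {y | y < 0 ∧ (x, y) ∈ H.verts}
  else sInf {y | 0 < y ∧ (x, y) ∈ H.verts}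

/-- The left point `ℓ(v)` (double-histogram version): if the leftward ray from `v` hits the
left boundary then the hit point, otherwise the endpoint of the hit vertical edge closer to
the base line. -/
def lpt (v : ℝ × ℝ) : ℝ × ℝ :=
  if H.lhit v = H.xs 0 then (H.xs 0, v.2) else (H.lhit v, H.nearY (H.lhit v) v.2)

/-- The right point `r(v)` (double-histogram version). -/
def rpt (v : ℝ × ℝ) : ℝ × ℝ :=
  if H.rhit v = H.xs (Fin.last H.m) then (H.xs (Fin.last H.m), v.2)
  else (H.rhit v, H.nearY (H.rhit v) v.2)

/-- The left base vertex (for a simple histogram, i.e. `n = 1`). -/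
def baseL : ℝ × ℝ := (H.xs 0, H.h ⟨0, H.hn⟩)

/-- The right base vertex (for a simple histogram, i.e. `n = 1`). -/
def baseR : ℝ × ℝ := (H.xs (Fin.last H.m), H.h ⟨0, H.hn⟩)

/-- The left point `ℓ(v)` (simple-histogram version): if the leftward ray from `v` hits the
left boundary then the left base vertex, otherwise the endpoint of the hit vertical edge
closer to the base edge. -/
def lptS (v : ℝ × ℝ) : ℝ × ℝ :=
  if H.lhit v = H.xs 0 then H.baseL else (H.lhit v, H.nearY (H.lhit v) v.2)

/-- The right point `r(v)` (simple-histogram version). -/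
def rptS (v : ℝ × ℝ) : ℝ × ℝ :=
  if H.rhit v = H.xs (Fin.last H.m) then H.baseR
  else (H.rhit v, H.nearY (H.rhit v) v.2)

/-- The interval `[p, q]`: all vertices of `P` between `p` and `q`. -/
def ivl (p q : ℝ × ℝ) : Set (ℝ × ℝ) :=
  {u | u ∈ H.verts ∧ p.1 ≤ u.1 ∧ u.1 ≤ q.1}

/-- The interval `I(v) = [ℓ(v), r(v)]` of a vertex (double-histogram version). -/
def Iv (v : ℝ × ℝ) : Set (ℝ × ℝ) := H.ivl (H.lpt v) (H.rpt v)

/-- The interval `I(v) = [ℓ(v), r(v)]` of a vertex (simple-histogram version). -/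
def IvS (v : ℝ × ℝ) : Set (ℝ × ℝ) := H.ivl (H.lptS v) (H.rptS v)

/-- The corresponding vertex `cv(v)`: the unique other vertex sharing a horizontal edge
(equivalently, by general position, the `y`-coordinate) with `v`. -/
def cv (v : ℝ × ℝ) : ℝ × ℝ :=
  (sSup {x | (x, v.2) ∈ H.verts ∧ x ≠ v.1}, v.2)

/-- `v` is a left vertex: the left endpoint of its horizontal edge. -/
def IsLeftVert (v : ℝ × ℝ) : Prop :=
  (∃ i : Fin H.m, v = (H.xs i.castSucc, H.d i)) ∨
    ∃ j : Fin H.n, v = (H.ys j.castSucc, H.h j)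

/-- `v` is a right vertex: the right endpoint of its horizontal edge. -/
def IsRightVert (v : ℝ × ℝ) : Prop :=
  (∃ i : Fin H.m, v = (H.xs i.succ, H.d i)) ∨
    ∃ j : Fin H.n, v = (H.ys j.succ, H.h j)

/-- `v` is an `ℓ`-reflex vertex (a left vertex with interior angle `3π/2`). -/
def IsLReflex (v : ℝ × ℝ) : Prop :=
  (∃ i : Fin H.m, ∃ _ : 0 < (i : ℕ),
      v = (H.xs i.castSucc, H.d i) ∧
        H.d ⟨(i : ℕ) - 1, lt_of_le_of_lt (Nat.sub_le _ _) i.isLt⟩ < H.d i) ∨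
    ∃ j : Fin H.n, ∃ _ : 0 < (j : ℕ),
      v = (H.ys j.castSucc, H.h j) ∧
        H.h j < H.h ⟨(j : ℕ) - 1, lt_of_le_of_lt (Nat.sub_le _ _) j.isLt⟩

/-- `v` is an `r`-reflex vertex (a right vertex with interior angle `3π/2`). -/
def IsRReflex (v : ℝ × ℝ) : Prop :=
  (∃ i : Fin H.m, ∃ hi : (i : ℕ) + 1 < H.m,
      v = (H.xs i.succ, H.d i) ∧ H.d ⟨(i : ℕ) + 1, hi⟩ < H.d i) ∨
    ∃ j : Fin H.n, ∃ hj : (j : ℕ) + 1 < H.n,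
      v = (H.ys j.succ, H.h j) ∧ H.h j < H.h ⟨(j : ℕ) + 1, hj⟩

/-- `v` is a reflex vertex. -/
def IsReflex (v : ℝ × ℝ) : Prop := H.IsLReflex v ∨ H.IsRReflex v

/-- The near dominator `nd(s,t)`: for `t` strictly right of `s`, the rightmost vertex of
`N(s)` to the left of `t`, ties broken towards the base line (symmetric otherwise). -/
def nd (s t : ℝ × ℝ) : ℝ × ℝ :=
  if s.1 < t.1 then
    let nx := sSup {x | (∃ y, (x, y) ∈ H.Nbr s) ∧ x ≤ t.1}
    (nx, closestToBase {y | (nx, y) ∈ H.Nbr s})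
  else
    let nx := sInf {x | (∃ y, (x, y) ∈ H.Nbr s) ∧ t.1 ≤ x}
    (nx, closestToBase {y | (nx, y) ∈ H.Nbr s})

/-- The far dominator `fd(s,t)`: for `t` strictly right of `s`, the leftmost vertex of
`N(s)` to the right of `t`, ties broken towards the base line; if there is no such vertex,
the point `r(s)` (symmetric otherwise). -/
def fd (s t : ℝ × ℝ) : ℝ × ℝ :=
  if s.1 < t.1 then
    if ∃ w ∈ H.Nbr s, t.1 ≤ w.1 then
      let nx := sInf {x | (∃ y, (x, y) ∈ H.Nbr s) ∧ t.1 ≤ x}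
      (nx, closestToBase {y | (nx, y) ∈ H.Nbr s})
    else H.rpt s
  else
    if ∃ w ∈ H.Nbr s, w.1 ≤ t.1 then
      let nx := sSup {x | (∃ y, (x, y) ∈ H.Nbr s) ∧ x ≤ t.1}
      (nx, closestToBase {y | (nx, y) ∈ H.Nbr s})
    else H.lpt s

/-- The sequence `a^i(s)`: `a^0(s) = s`, and `a^i(s)` is the leftmost vertex of
`A^i(s) = {v ∈ N(s) : ℓ(v)_x < ℓ(a^{i-1}(s))_x}` (ties towards the base line),
or `a^{i-1}(s)` if `A^i(s)` is empty. -/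
def aSeq (s : ℝ × ℝ) : ℕ → ℝ × ℝ := fun k =>
  Nat.rec (motive := fun _ => ℝ × ℝ) s
    (fun _ prev =>
      let A : Set (ℝ × ℝ) := {v | v ∈ H.Nbr s ∧ (H.lpt v).1 < (H.lpt prev).1}
      if A = ∅ then prev
      else
        let ax := sInf {x | ∃ y, (x, y) ∈ A}
        (ax, closestToBase {y | (ax, y) ∈ A}))
    k

/-- The sequence `b^i(s)`: `b^0(s) = s`, and `b^i(s)` is the rightmost vertex of
`B^i(s) = {v ∈ N(s) : r(v)_x > r(b^{i-1}(s))_x}` (ties towards the base line),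
or `b^{i-1}(s)` if `B^i(s)` is empty. -/
def bSeq (s : ℝ × ℝ) : ℕ → ℝ × ℝ := fun k =>
  Nat.rec (motive := fun _ => ℝ × ℝ) s
    (fun _ prev =>
      let B : Set (ℝ × ℝ) := {v | v ∈ H.Nbr s ∧ (H.rpt prev).1 < (H.rpt v).1}
      if B = ∅ then prev
      else
        let bx := sSup {x | ∃ y, (x, y) ∈ B}
        (bx, closestToBase {y | (bx, y) ∈ B}))
    k

/-- The pair of the `k`-th bottom dominator `bd^k(s)` and `k`-th top dominator `td^k(s)`:
`bd^0(s) = td^0(s) = s`; for `k > 0`, with `I^k(s) = I(bd^{k-1}(s)) ∪ I(td^{k-1}(s))`,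
`bd^k(s)` is the leftmost vertex of `I^k(s)⁻` minimizing the distance to the base line,
and `td^k(s)` the leftmost vertex of `I^k(s)⁺` minimizing the distance to the base line;
if one of the two sets is empty, the corresponding dominator equals the other one. -/
def bdtd (s : ℝ × ℝ) : ℕ → (ℝ × ℝ) × (ℝ × ℝ) := fun k =>
  Nat.rec (motive := fun _ => (ℝ × ℝ) × (ℝ × ℝ)) (s, s)
    (fun _ p =>
      let J : Set (ℝ × ℝ) := H.Iv p.1 ∪ H.Iv p.2
      let Jm : Set (ℝ × ℝ) := {v | v ∈ J ∧ v.2 < 0}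
      let Jp : Set (ℝ × ℝ) := {v | v ∈ J ∧ 0 < v.2}
      if Jm = ∅ then (leftmostLowest Jp, leftmostLowest Jp)
      else if Jp = ∅ then (leftmostLowest Jm, leftmostLowest Jm)
      else (leftmostLowest Jm, leftmostLowest Jp))
    k

/-- The `k`-th interval `I^k(s)`: `I^0(s) = {s}` and
`I^{k+1}(s) = I(bd^k(s)) ∪ I(td^k(s))`. -/
def Ipow (s : ℝ × ℝ) : ℕ → Set (ℝ × ℝ) := fun k =>
  Nat.rec (motive := fun _ => Set (ℝ × ℝ)) {s}
    (fun k _ => H.Iv (H.bdtd s k).1 ∪ H.Iv (H.bdtd s k).2) k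

/-- `w` lies on a shortest path from `s` to `t` in the visibility graph. -/
def OnShortestPath (s t w : ↥H.verts) : Prop :=
  ∃ p : H.visGraph.Walk s t, p.length = H.visGraph.dist s t ∧ w ∈ p.support

end DoubleHistogram

/-- A routing scheme for a graph `G`: every vertex carries a binary label and a binary
routing table, and the routing function maps (link table of the current vertex, routing
table of the current vertex, label of the target, current header) to the next vertex
together with the new header. -/
structure RoutingScheme {V : Type} (G : SimpleGraph V) where
  lab : V → List Bool
  tab : V → List Bool
  route : Set (List Bool) → List Bool → List Bool → List Bool → V × List Bool

namespace RoutingScheme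

variable {V : Type} {G : SimpleGraph V} (R : RoutingScheme G)

/-- One routing step at vertex `p` with header `h`, towards the target `t`: the routing
function is applied to the link table of `p` (the labels of its closed neighborhood),
the routing table of `p`, the label of `t` and the header `h`. -/
def step (t p : V) (h : List Bool) : V × List Bool :=
  R.route (R.lab '' {w | w = p ∨ G.Adj p w}) (R.tab p) (R.lab t) h

/-- The routing sequence from `s` towards `t`, starting with the empty header. -/
def seq (s t : V) : ℕ → V × List Bool := fun k =>
  Nat.rec (motive := fun _ => V × List Bool) (s, ([] : List Bool))
    (fun _ q => R.step t q.1 q.2) k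

end RoutingScheme

/-! The induction invariant is that `bd^k(s)` is a vertex co-visible with `td^k(s)`. Two
co-visible points lie in each other's horizontal reach, so their intervals overlap and
`I^{k+1}(s)` consists of all vertices over a single `x`-interval `[L, R]`. Take the bottom and
the top vertex over `[L, R]` closest to the base line. Both sit on column breakpoints, so each
column met by the vertical strip between them has an endpoint vertex over that strip, hence
over `[L, R]`; that vertex is no closer to the base line, so the column reaches down (up) at
least to the chosen vertex, and the spanned rectangle lies in `P`. -/

section Columns

variable {α : Type*} [LinearOrder α] {m : ℕ} {f : Fin (m + 1) → α} {x : α}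

theorem exists_column_endpoint_mem_Icc_of_le (hf : Monotone f) (hm : 0 < m) (h0 : f 0 ≤ x)
    (k : Fin (m + 1)) (hk : x ≤ f k) :
    ∃ i : Fin m, x ∈ Icc (f i.castSucc) (f i.succ) ∧
      (f i.castSucc ∈ Icc x (f k) ∨ f i.succ ∈ Icc x (f k)) := by
  induction k using Fin.induction with
  | zero =>
    exact ⟨⟨0, hm⟩, ⟨h0, hk.trans (hf (Fin.zero_le _))⟩, Or.inl ⟨hk, le_rfl⟩⟩
  | succ i ih =>
    by_cases hx : x ≤ f i.castSucc
    · obtain ⟨j, hxj, hend⟩ := ih hx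
      have hsub : Icc x (f i.castSucc) ⊆ Icc x (f i.succ) :=
        Icc_subset_Icc_right (hf Fin.castSucc_lt_succ.le)
      exact ⟨j, hxj, hend.imp (@hsub _) (@hsub _)⟩
    · exact ⟨i, ⟨(not_le.1 hx).le, hk⟩, Or.inr ⟨hk, le_rfl⟩⟩

theorem exists_column_endpoint_mem_Icc_of_ge (hf : Monotone f) (hm : 0 < m)
    (h1 : x ≤ f (Fin.last m)) (k : Fin (m + 1)) (hk : f k ≤ x) :
    ∃ i : Fin m, x ∈ Icc (f i.castSucc) (f i.succ) ∧
      (f i.castSucc ∈ Icc (f k) x ∨ f i.succ ∈ Icc (f k) x) := by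
  induction k using Fin.reverseInduction with
  | last =>
    obtain ⟨i, hi⟩ : ∃ i : Fin m, i.succ = Fin.last m := ⟨⟨m - 1, by omega⟩, by ext; simp; omega⟩
    refine ⟨i, ⟨(hf (Fin.le_last _)).trans hk, hi ▸ h1⟩, Or.inr ?_⟩
    rw [hi]
    exact ⟨le_rfl, hk⟩
  | cast i ih =>
    by_cases hx : f i.succ ≤ x
    · obtain ⟨j, hxj, hend⟩ := ih hx
      have hsub : Icc (f i.succ) x ⊆ Icc (f i.castSucc) x :=
        Icc_subset_Icc_left (hf Fin.castSucc_lt_succ.le)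
      exact ⟨j, hxj, hend.imp (@hsub _) (@hsub _)⟩
    · exact ⟨i, ⟨hk, (not_le.1 hx).le⟩, Or.inl ⟨le_rfl, hk⟩⟩

theorem exists_column_endpoint_mem_uIcc (hf : Monotone f) (hm : 0 < m) (h0 : f 0 ≤ x)
    (h1 : x ≤ f (Fin.last m)) (k : Fin (m + 1)) :
    ∃ i : Fin m, x ∈ Icc (f i.castSucc) (f i.succ) ∧
      (f i.castSucc ∈ uIcc x (f k) ∨ f i.succ ∈ uIcc x (f k)) := by
  rcases le_total x (f k) with hk | hk
  · obtain ⟨i, hxi, hend⟩ := exists_column_endpoint_mem_Icc_of_le hf hm h0 k hk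
    exact ⟨i, hxi, hend.imp (fun h => Icc_subset_uIcc h) (fun h => Icc_subset_uIcc h)⟩
  · obtain ⟨i, hxi, hend⟩ := exists_column_endpoint_mem_Icc_of_ge hf hm h1 k hk
    exact ⟨i, hxi, hend.imp (fun h => Icc_subset_uIcc' h) (fun h => Icc_subset_uIcc' h)⟩

end Columns

theorem closestToBase_spec {A : Set ℝ} (hfin : A.Finite) (hne : A.Nonempty)
    (hsign : (∀ y ∈ A, y < 0) ∨ (∀ y ∈ A, 0 < y)) :
    closestToBase A ∈ A ∧ ∀ y ∈ A, |closestToBase A| ≤ |y| := by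
  obtain ⟨y₀, hy₀, hmin⟩ := A.exists_min_image (fun y => |y|) hfin hne
  have hminimizers : {y | y ∈ A ∧ ∀ y' ∈ A, |y| ≤ |y'|} = {y₀} := by
    ext y
    refine ⟨fun ⟨hy, hy_min⟩ => ?_, fun hy => hy ▸ ⟨hy₀, hmin⟩⟩
    have habs : |y| = |y₀| := le_antisymm (hy_min y₀ hy₀) (hmin y hy)
    rcases hsign with h | h
    · rwa [abs_of_neg (h y hy), abs_of_neg (h y₀ hy₀), neg_inj] at habs
    · rwa [abs_of_pos (h y hy), abs_of_pos (h y₀ hy₀)] at habs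
  rw [closestToBase, hminimizers, csSup_singleton]
  exact ⟨hy₀, hmin⟩

theorem leftmostLowest_spec {S : Set (ℝ × ℝ)} (hfin : S.Finite) (hne : S.Nonempty)
    (hsign : (∀ q ∈ S, q.2 < 0) ∨ (∀ q ∈ S, 0 < q.2)) :
    leftmostLowest S ∈ S ∧ ∀ q ∈ S, |(leftmostLowest S).2| ≤ |q.2| := by
  set X : Set ℝ := {x | ∃ y, (x, y) ∈ S ∧ ∀ q ∈ S, |y| ≤ |q.2|}
  obtain ⟨q₀, hq₀, hmin⟩ := S.exists_min_image (fun q => |q.2|) hfin hne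
  have hXne : X.Nonempty := ⟨q₀.1, q₀.2, hq₀, hmin⟩
  have hXfin : X.Finite := (hfin.image Prod.fst).subset fun x ⟨y, hy, _⟩ => ⟨(x, y), hy, rfl⟩
  obtain ⟨y₁, hy₁, hy₁_min⟩ : sInf X ∈ X := hXne.csInf_mem hXfin
  set A : Set ℝ := {y | (sInf X, y) ∈ S}
  have hA : closestToBase A ∈ A ∧ ∀ y ∈ A, |closestToBase A| ≤ |y| :=
    closestToBase_spec ((hfin.image Prod.snd).subset fun y hy => ⟨_, hy, rfl⟩) ⟨y₁, hy₁⟩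
      (hsign.imp (fun h y hy => h _ hy) (fun h y hy => h _ hy))
  exact ⟨hA.1, fun q hq => (hA.2 y₁ hy₁).trans (hy₁_min q hq)⟩

namespace DoubleHistogram

variable (H : DoubleHistogram)

theorem bottom_mem_verts (i : Fin H.m) :
    (H.xs i.castSucc, H.d i) ∈ H.verts ∧ (H.xs i.succ, H.d i) ∈ H.verts :=
  ⟨Or.inl (mem_iUnion.2 ⟨i, Or.inl rfl⟩), Or.inl (mem_iUnion.2 ⟨i, Or.inr rfl⟩)⟩

theorem top_mem_verts (j : Fin H.n) :
    (H.ys j.castSucc, H.h j) ∈ H.verts ∧ (H.ys j.succ, H.h j) ∈ H.verts :=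
  ⟨Or.inr (mem_iUnion.2 ⟨j, Or.inl rfl⟩), Or.inr (mem_iUnion.2 ⟨j, Or.inr rfl⟩)⟩

theorem verts_finite : H.verts.Finite :=
  .union (finite_iUnion fun _ => (finite_singleton _).insert _)
    (finite_iUnion fun _ => (finite_singleton _).insert _)

theorem mem_verts_cases {v : ℝ × ℝ} (hv : v ∈ H.verts) :
    (v.2 < 0 ∧ ∃ a, v.1 = H.xs a) ∨ (0 < v.2 ∧ ∃ b, v.1 = H.ys b) := by
  rcases hv with hv | hv <;> obtain ⟨i, hi⟩ := mem_iUnion.1 hv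
  · rcases hi with rfl | rfl
    exacts [Or.inl ⟨H.d_neg i, _, rfl⟩, Or.inl ⟨H.d_neg i, _, rfl⟩]
  · rcases hi with rfl | rfl
    exacts [Or.inr ⟨H.h_pos i, _, rfl⟩, Or.inr ⟨H.h_pos i, _, rfl⟩]

theorem ys_mem_Icc (b : Fin (H.n + 1)) : H.ys b ∈ Icc (H.xs 0) (H.xs (Fin.last H.m)) := by
  rw [← H.left_eq, ← H.right_eq]
  exact ⟨H.ys_mono.monotone (Fin.zero_le b), H.ys_mono.monotone (Fin.le_last b)⟩

theorem fst_mem_Icc_of_mem_verts {v : ℝ × ℝ} (hv : v ∈ H.verts) :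
    v.1 ∈ Icc (H.xs 0) (H.xs (Fin.last H.m)) := by
  rcases H.mem_verts_cases hv with ⟨_, a, ha⟩ | ⟨_, b, hb⟩
  · rw [ha]
    exact ⟨H.xs_mono.monotone (Fin.zero_le a), H.xs_mono.monotone (Fin.le_last a)⟩
  · exact hb ▸ H.ys_mem_Icc b

theorem fst_mem_Icc_of_mem_region {z : ℝ × ℝ} (hz : z ∈ H.region) :
    z.1 ∈ Icc (H.xs 0) (H.xs (Fin.last H.m)) := by
  rcases hz with hz | hz <;> obtain ⟨i, hi, -⟩ := mem_iUnion.1 hz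
  · exact ⟨(H.xs_mono.monotone (Fin.zero_le _)).trans hi.1,
      hi.2.trans (H.xs_mono.monotone (Fin.le_last _))⟩
  · exact ⟨(H.ys_mem_Icc _).1.trans hi.1, hi.2.trans (H.ys_mem_Icc _).2⟩

theorem verts_subset_region : H.verts ⊆ H.region := by
  intro v hv
  rcases hv with hv | hv <;> obtain ⟨i, hi⟩ := mem_iUnion.1 hv
  · have hle : H.xs i.castSucc ≤ H.xs i.succ := H.xs_mono.monotone Fin.castSucc_lt_succ.le
    refine Or.inl (mem_iUnion.2 ⟨i, ?_⟩)
    rcases hi with rfl | rfl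
    exacts [⟨⟨le_rfl, hle⟩, le_rfl, (H.d_neg i).le⟩, ⟨⟨hle, le_rfl⟩, le_rfl, (H.d_neg i).le⟩]
  · have hle : H.ys i.castSucc ≤ H.ys i.succ := H.ys_mono.monotone Fin.castSucc_lt_succ.le
    refine Or.inr (mem_iUnion.2 ⟨i, ?_⟩)
    rcases hi with rfl | rfl
    exacts [⟨⟨le_rfl, hle⟩, (H.h_pos i).le, le_rfl⟩, ⟨⟨hle, le_rfl⟩, (H.h_pos i).le, le_rfl⟩]

theorem covisible_self {v : ℝ × ℝ} (hv : v ∈ H.region) : H.covisible v v := by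
  rintro z ⟨hz₁, hz₂⟩
  simp only [min_self, max_self, Icc_self, mem_singleton_iff] at hz₁ hz₂
  rwa [Prod.ext hz₁ hz₂]

theorem lhit_le_min {v w : ℝ × ℝ} (hvw : H.covisible v w) : H.lhit v ≤ min v.1 w.1 := by
  refine csInf_le ⟨H.xs 0, fun x hx => ?_⟩ ⟨min_le_left _ _, ?_⟩
  · exact (H.fst_mem_Icc_of_mem_region (hx.2 (mk_mem_prod ⟨le_rfl, hx.1⟩ rfl))).1
  · rintro ⟨x, y⟩ ⟨hx, rfl⟩
    exact hvw ⟨⟨hx.1, hx.2.trans (le_max_left _ _)⟩, min_le_left _ _, le_max_left _ _⟩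

theorem max_le_rhit {v w : ℝ × ℝ} (hvw : H.covisible v w) : max v.1 w.1 ≤ H.rhit v := by
  refine le_csSup ⟨H.xs (Fin.last H.m), fun x hx => ?_⟩ ⟨le_max_left _ _, ?_⟩
  · exact (H.fst_mem_Icc_of_mem_region (hx.2 (mk_mem_prod ⟨hx.1, le_rfl⟩ rfl))).2
  · rintro ⟨x, y⟩ ⟨hx, rfl⟩
    exact hvw ⟨⟨(min_le_left _ _).trans hx.1, hx.2⟩, min_le_left _ _, le_max_left _ _⟩

theorem mem_Iv {u v : ℝ × ℝ} : u ∈ H.Iv v ↔ u ∈ H.verts ∧ u.1 ∈ Icc (H.lhit v) (H.rhit v) := by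
  have hl : (H.lpt v).1 = H.lhit v := by unfold lpt; split_ifs with h <;> simp [h]
  have hr : (H.rpt v).1 = H.rhit v := by unfold rpt; split_ifs with h <;> simp [h]
  simp only [Iv, ivl, hl, hr, mem_ofPred_eq, mem_Icc]

theorem Iv_union_Iv_eq {p q : ℝ × ℝ} (hpq : H.covisible p q) :
    H.Iv p ∪ H.Iv q =
      H.verts ∩ Prod.fst ⁻¹' Icc (min (H.lhit p) (H.lhit q)) (max (H.rhit p) (H.rhit q)) := by
  have hqp := H.covisible_symm hpq
  rw [← Icc_union_Icc']
  · ext u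
    simp only [mem_union, H.mem_Iv, mem_inter_iff, mem_preimage, and_or_left]
  · exact ((H.lhit_le_min hqp).trans (min_le_right _ _)).trans
      ((le_max_left _ _).trans (H.max_le_rhit hpq))
  · exact ((H.lhit_le_min hpq).trans (min_le_left _ _)).trans
      ((le_max_right _ _).trans (H.max_le_rhit hqp))

theorem Icc_prod_Icc_subset_region_of_bottom {a b y₀ : ℝ}
    (hab : Icc a b ⊆ Icc (H.xs 0) (H.xs (Fin.last H.m))) {c : Fin (H.m + 1)}
    (hc : H.xs c ∈ Icc a b)
    (hlow : ∀ i : Fin H.m, H.xs i.castSucc ∈ Icc a b ∨ H.xs i.succ ∈ Icc a b → H.d i ≤ y₀) :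
    Icc a b ×ˢ Icc y₀ 0 ⊆ H.region := by
  rintro ⟨x, y⟩ ⟨hx, hy⟩
  obtain ⟨i, hxi, hend⟩ :=
    exists_column_endpoint_mem_uIcc H.xs_mono.monotone H.hm (hab hx).1 (hab hx).2 c
  have hsub : uIcc x (H.xs c) ⊆ Icc a b := uIcc_subset_Icc hx hc
  exact Or.inl (mem_iUnion.2 ⟨i, hxi, (hlow i (hend.imp (@hsub _) (@hsub _))).trans hy.1, hy.2⟩)

theorem Icc_prod_Icc_subset_region_of_top {a b y₀ : ℝ}
    (hab : Icc a b ⊆ Icc (H.ys 0) (H.ys (Fin.last H.n))) {c : Fin (H.n + 1)}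
    (hc : H.ys c ∈ Icc a b)
    (hhigh : ∀ j : Fin H.n, H.ys j.castSucc ∈ Icc a b ∨ H.ys j.succ ∈ Icc a b → y₀ ≤ H.h j) :
    Icc a b ×ˢ Icc 0 y₀ ⊆ H.region := by
  rintro ⟨x, y⟩ ⟨hx, hy⟩
  obtain ⟨j, hxj, hend⟩ :=
    exists_column_endpoint_mem_uIcc H.ys_mono.monotone H.hn (hab hx).1 (hab hx).2 c
  have hsub : uIcc x (H.ys c) ⊆ Icc a b := uIcc_subset_Icc hx hc
  exact Or.inr (mem_iUnion.2 ⟨j, hxj, hy.1, hy.2.trans (hhigh j (hend.imp (@hsub _) (@hsub _)))⟩)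

theorem covisible_of_forall_le {bd td : ℝ × ℝ} (hbd : bd ∈ H.verts) (hbd0 : bd.2 < 0)
    (htd : td ∈ H.verts) (htd0 : 0 < td.2)
    (hbd_min : ∀ v ∈ H.verts, v.1 ∈ uIcc bd.1 td.1 → v.2 < 0 → v.2 ≤ bd.2)
    (htd_min : ∀ v ∈ H.verts, v.1 ∈ uIcc bd.1 td.1 → 0 < v.2 → td.2 ≤ v.2) :
    H.covisible bd td := by
  obtain ⟨-, a, ha⟩ := (H.mem_verts_cases hbd).resolve_right fun h => (h.1.trans hbd0).false
  obtain ⟨-, b, hb⟩ := (H.mem_verts_cases htd).resolve_left fun h => (h.1.trans htd0).false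
  have hrange : uIcc bd.1 td.1 ⊆ Icc (H.xs 0) (H.xs (Fin.last H.m)) :=
    uIcc_subset_Icc (H.fst_mem_Icc_of_mem_verts hbd) (H.fst_mem_Icc_of_mem_verts htd)
  have hlower : uIcc bd.1 td.1 ×ˢ Icc bd.2 0 ⊆ H.region := by
    refine H.Icc_prod_Icc_subset_region_of_bottom hrange (c := a) (ha ▸ left_mem_uIcc) ?_
    rintro i (hi | hi)
    exacts [hbd_min _ (H.bottom_mem_verts i).1 hi (H.d_neg i),
      hbd_min _ (H.bottom_mem_verts i).2 hi (H.d_neg i)]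
  have hupper : uIcc bd.1 td.1 ×ˢ Icc 0 td.2 ⊆ H.region := by
    refine H.Icc_prod_Icc_subset_region_of_top (H.left_eq ▸ H.right_eq ▸ hrange)
      (c := b) (hb ▸ right_mem_uIcc) ?_
    rintro j (hj | hj)
    exacts [htd_min _ (H.top_mem_verts j).1 hj (H.h_pos j),
      htd_min _ (H.top_mem_verts j).2 hj (H.h_pos j)]
  unfold covisible
  rw [min_eq_left (hbd0.trans htd0).le, max_eq_right (hbd0.trans htd0).le,
    ← Icc_union_Icc_eq_Icc hbd0.le htd0.le, prod_union]
  exact union_subset hlower hupper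

theorem covisible_leftmostLowest {J : Set (ℝ × ℝ)} {L R : ℝ}
    (hJ : J = H.verts ∩ Prod.fst ⁻¹' Icc L R)
    (hneg : {v | v ∈ J ∧ v.2 < 0}.Nonempty) (hpos : {v | v ∈ J ∧ 0 < v.2}.Nonempty) :
    H.covisible (leftmostLowest {v | v ∈ J ∧ v.2 < 0}) (leftmostLowest {v | v ∈ J ∧ 0 < v.2}) := by
  have hfin : J.Finite := hJ ▸ H.verts_finite.subset inter_subset_left
  set bd := leftmostLowest {v | v ∈ J ∧ v.2 < 0}
  set td := leftmostLowest {v | v ∈ J ∧ 0 < v.2}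
  obtain ⟨⟨hbdJ, hbd0⟩, hbd_min⟩ : (bd ∈ J ∧ bd.2 < 0) ∧ _ :=
    leftmostLowest_spec (hfin.subset fun v hv => hv.1) hneg (Or.inl fun q hq => hq.2)
  obtain ⟨⟨htdJ, htd0⟩, htd_min⟩ : (td ∈ J ∧ 0 < td.2) ∧ _ :=
    leftmostLowest_spec (hfin.subset fun v hv => hv.1) hpos (Or.inr fun q hq => hq.2)
  rw [hJ] at hbdJ htdJ
  have hmemJ : ∀ v ∈ H.verts, v.1 ∈ uIcc bd.1 td.1 → v ∈ J :=
    fun v hv hx => hJ ▸ ⟨hv, uIcc_subset_Icc hbdJ.2 htdJ.2 hx⟩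
  refine H.covisible_of_forall_le hbdJ.1 hbd0 htdJ.1 htd0 (fun v hv hx hv0 => ?_)
    (fun v hv hx hv0 => ?_)
  · have hle := hbd_min v ⟨hmemJ v hv hx, hv0⟩
    rw [abs_of_neg hbd0, abs_of_neg hv0] at hle
    linarith
  · have hle := htd_min v ⟨hmemJ v hv hx, hv0⟩
    rwa [abs_of_pos htd0, abs_of_pos hv0] at hle

/-- The step of the recursion defining `bdtd`: `bdtd s (k + 1)` unfolds to
`dominatorStep (bdtd s k)`. -/
def dominatorStep (p : (ℝ × ℝ) × (ℝ × ℝ)) : (ℝ × ℝ) × (ℝ × ℝ) :=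
  let J : Set (ℝ × ℝ) := H.Iv p.1 ∪ H.Iv p.2
  let Jm : Set (ℝ × ℝ) := {v | v ∈ J ∧ v.2 < 0}
  let Jp : Set (ℝ × ℝ) := {v | v ∈ J ∧ 0 < v.2}
  if Jm = ∅ then (leftmostLowest Jp, leftmostLowest Jp)
  else if Jp = ∅ then (leftmostLowest Jm, leftmostLowest Jm)
  else (leftmostLowest Jm, leftmostLowest Jp)

theorem dominatorStep_spec {p : (ℝ × ℝ) × (ℝ × ℝ)} (hp : p.1 ∈ H.verts)
    (hco : H.covisible p.1 p.2) :
    (H.dominatorStep p).1 ∈ H.verts ∧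
      H.covisible (H.dominatorStep p).1 (H.dominatorStep p).2 := by
  have hJ := H.Iv_union_Iv_eq hco
  set J := H.Iv p.1 ∪ H.Iv p.2
  have hfin : J.Finite := hJ ▸ H.verts_finite.subset inter_subset_left
  have hpJ : p.1 ∈ J := Or.inl (H.mem_Iv.2 ⟨hp, (H.lhit_le_min hco).trans (min_le_left _ _),
    (le_max_left _ _).trans (H.max_le_rhit hco)⟩)
  have hlowest : ∀ S ⊆ J, S.Nonempty → ((∀ q ∈ S, q.2 < 0) ∨ (∀ q ∈ S, 0 < q.2)) →
      leftmostLowest S ∈ H.verts ∧ H.covisible (leftmostLowest S) (leftmostLowest S) := by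
    intro S hSJ hne hsign
    have hv := (hJ ▸ hSJ (leftmostLowest_spec (hfin.subset hSJ) hne hsign).1).1
    exact ⟨hv, H.covisible_self (H.verts_subset_region hv)⟩
  simp only [dominatorStep]
  split_ifs with hneg hpos
  · refine hlowest _ (fun v hv => hv.1) ?_ (Or.inr fun q hq => hq.2)
    rcases H.mem_verts_cases hp with ⟨hp0, -⟩ | ⟨hp0, -⟩
    exacts [(eq_empty_iff_forall_notMem.1 hneg p.1 ⟨hpJ, hp0⟩).elim, ⟨p.1, hpJ, hp0⟩]
  · exact hlowest _ (fun v hv => hv.1) (nonempty_iff_ne_empty.2 hneg)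
      (Or.inl fun q hq => hq.2)
  · have hneg' := nonempty_iff_ne_empty.2 hneg
    refine ⟨?_, H.covisible_leftmostLowest hJ hneg' (nonempty_iff_ne_empty.2 hpos)⟩
    exact (hlowest _ (fun v hv => hv.1) hneg' (Or.inl fun q hq => hq.2)).1

end DoubleHistogram

/-- In a double histogram, for any vertex `s` and any `k ≥ 0`, the
dominators `bd^k(s)` and `td^k(s)` are co-visible. -/
theorem dominators_see_each_other
    (H : DoubleHistogram) (s : ↥H.verts) (k : ℕ) :
    H.covisible (H.bdtd (s : ℝ × ℝ) k).1 (H.bdtd (s : ℝ × ℝ) k).2 := by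
  suffices h : (H.bdtd s k).1 ∈ H.verts ∧ H.covisible (H.bdtd s k).1 (H.bdtd s k).2 from h.2
  induction k with
  | zero => exact ⟨s.2, H.covisible_self (H.verts_subset_region s.2)⟩
  | succ k ih => exact H.dominatorStep_spec ih.1 ih.2
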